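/- arXiv:1705.07350 — 4 statements merged into one kernel-verified Lean document; each statement's English description precedes it below -/
import Mathlib

section
/- Let G be a group and H ≤ G a subgroup. Suppose there exist x, y ∈ G with x ∉ H, y ∉ H and xH ≠ yH, and suppose every element g ∈ G \ H satisfies g² = e. Then H is abelian. -/
/-- If the complement of `H` meets at least two left cosets and every element outside
`H` squares to the identity, then `H` is abelian. -/
theorem stmt4 {G : Type*} [Group G] (H : Subgroup G)
    (hex : ∃ x y : G, x ∉ H ∧ y ∉ H ∧ (QuotientGroup.mk x : G ⧸ H) ≠ QuotientGroup.mk y)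
    (hsq : ∀ g : G, g ∉ H → g ^ 2 = 1) :
    ∀ a ∈ H, ∀ b ∈ H, a * b = b * a := by
  obtain ⟨x, _, hx, _, _⟩ := hex
  have hx2 : x * x = 1 := by have := hsq x hx; rwa [sq] at this
  have key : ∀ c ∈ H, x * c * x = c⁻¹ := by
    intro c hc
    have hxc : x * c ∉ H := fun h => hx (by simpa using H.mul_mem h (H.inv_mem hc))
    have h2 : (x * c) * (x * c) = 1 := by have := hsq _ hxc; rwa [sq] at this
    have : (x * c * x) * c = 1 := by rw [mul_assoc (x * c) x c]; exact h2
    calc x * c * x = (x * c * x) * c * c⁻¹ := by group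
      _ = c⁻¹ := by rw [this, one_mul]
  intro a ha b hb
  have hab : x * (a * b) * x = (a * b)⁻¹ := key _ (H.mul_mem ha hb)
  have hab' : x * (a * b) * x = a⁻¹ * b⁻¹ := by
    have h3 : x * (a * b) * x = (x * a * x) * (x * b * x) := by
      rw [show (x * a * x) * (x * b * x) = x * a * (x * x) * b * x by group, hx2]; group
    rw [h3, key a ha, key b hb]
  have h4 : (a * b)⁻¹ = (b * a)⁻¹ := by
    rw [mul_inv_rev, mul_inv_rev, ← hab', hab, mul_inv_rev]
  exact inv_injective h4
end

section
/- Let Γ = Γ₁ ∗_Σ Γ₂ be an amalgamated free product such that for each i ∈ {1,2}, every g ∈ Γᵢ \ Σ satisfies [Σ : Σ ∩ gΣg⁻¹] = ∞. Then every g ∈ Γ \ Σ satisfies [Σ : Σ ∩ gΣg⁻¹] = ∞; equivalently, Comm¹_Γ(Σ) = Σ. -/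
open Monoid PushoutI

/-- The conjugate subgroup `g S g⁻¹`. -/
def conjSub {G : Type*} [Group G] (g : G) (S : Subgroup G) : Subgroup G :=
  S.map (MulAut.conj g).toMonoidHom

/-! Write `g ∉ Σ` as a reduced word `x₁ ⋯ xₙ`, absorbing its `Σ`-part into the first letter,
so that `x₁ ∈ Γᵢ \ Σ`. If `σ ∈ Σ` and `g⁻¹ σ g = τ ∈ Σ` while `y = x₁⁻¹ σ x₁ ∉ Σ`, then
`y x₂ ⋯ xₙ = x₂ ⋯ xₙ τ`; absorbing `τ` into the last letter writes this element as reduced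
words of lengths `n` and `n - 1`, contradicting the normal form theorem. Hence
`Σ ∩ gΣg⁻¹ ⊆ Σ ∩ x₁Σx₁⁻¹`, which has infinite index in `Σ` by hypothesis. -/

lemma mem_conjSub {Γ : Type*} [Group Γ] {g s : Γ} {S : Subgroup Γ} :
    s ∈ conjSub g S ↔ g⁻¹ * s * g ∈ S := by
  rw [conjSub, Subgroup.mem_map_equiv, MulAut.conj_symm_apply]

namespace Monoid.PushoutI

open CoprodI

variable {ι : Type*} {G : ι → Type*} {H : Type*} [Group H] [∀ i, Group (G i)]
  {φ : ∀ i, H →* G i}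

lemma ofCoprodI_word_prod (w : Word G) :
    ofCoprodI (φ := φ) w.prod = (w.toList.map fun p => of p.1 p.2).prod := by
  simp [Word.prod, map_list_prod, Function.comp_def]

lemma exists_reduced_toList_eq {L : List (Σ i, G i)} (hL : ∀ p ∈ L, p.2 ∉ (φ p.1).range)
    (hchain : L.IsChain fun a b => a.1 ≠ b.1) :
    ∃ w : Word G, Reduced φ w ∧ w.toList = L :=
  ⟨⟨L, fun p hp h1 => hL p hp (h1 ▸ one_mem _), hchain⟩, hL, rfl⟩

lemma NormalWord.reduced {d : Transversal φ} (w : NormalWord d) : Reduced φ w.toWord := by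
  rintro ⟨i, g⟩ hg hgφ
  dsimp only at hgφ ⊢
  apply w.ne_one _ hg
  have hcompl := d.compl i
  exact congrArg Subtype.val
    ((hcompl.equiv_snd_eq_self_of_mem_of_one_mem (one_mem _) (w.normalized i g hg)).symm.trans
      (hcompl.equiv_snd_eq_one_of_mem_of_one_mem (d.one_mem i) hgφ))

lemma Reduced.map_fst_eq_of_prod_eq (hφ : ∀ i, Function.Injective (φ i)) {w₁ w₂ : Word G}
    (h₁ : Reduced φ w₁) (h₂ : Reduced φ w₂)
    (h : ofCoprodI (φ := φ) w₁.prod = ofCoprodI w₂.prod) :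
    w₁.toList.map Sigma.fst = w₂.toList.map Sigma.fst := by
  obtain ⟨d⟩ := NormalWord.transversal_nonempty φ hφ
  obtain ⟨v₁, hv₁, hm₁⟩ := h₁.exists_normalWord_prod_eq d
  obtain ⟨v₂, hv₂, hm₂⟩ := h₂.exists_normalWord_prod_eq d
  rw [← hm₁, ← hm₂, NormalWord.prod_injective (hv₁.trans (h.trans hv₂.symm))]

lemma Reduced.exists_prod_mul_base {w : Word G} (hw : Reduced φ w) (hne : w.toList ≠ [])
    (τ : H) : ∃ w' : Word G, Reduced φ w' ∧
      w'.toList.map Sigma.fst = w.toList.map Sigma.fst ∧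
      ofCoprodI (φ := φ) w'.prod = ofCoprodI w.prod * base φ τ := by
  obtain ⟨l, ⟨j, z⟩, hl⟩ := (List.eq_nil_or_concat w.toList).resolve_left hne
  rw [List.concat_eq_append] at hl
  have hz : z ∉ (φ j).range := hw (⟨j, z⟩ : Σ i, G i) (by simp [hl])
  have hfst : (l ++ [(⟨j, z * φ j τ⟩ : Σ i, G i)]).map Sigma.fst = w.toList.map Sigma.fst := by
    simp [hl]
  obtain ⟨w', hw', hw'L⟩ := exists_reduced_toList_eq (φ := φ) (L := l ++ [⟨j, z * φ j τ⟩])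
    (by
      simp only [List.mem_append, List.mem_singleton]
      rintro p (hp | rfl)
      · exact hw p (by simp [hl, hp])
      · rwa [mul_mem_cancel_right (MonoidHom.mem_range.2 ⟨τ, rfl⟩)])
    (by rw [← List.isChain_map Sigma.fst, hfst, List.isChain_map]; exact w.chain_ne)
  refine ⟨w', hw', hw'L ▸ hfst, ?_⟩
  simp [ofCoprodI_word_prod, hw'L, hl, mul_assoc, of_apply_eq_base]

lemma Reduced.map_fst_eq_of_prod_eq_mul_base (hφ : ∀ i, Function.Injective (φ i))
    {w₁ w₂ : Word G} (h₁ : Reduced φ w₁) (h₂ : Reduced φ w₂) {τ : H}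
    (h : ofCoprodI (φ := φ) w₁.prod = ofCoprodI w₂.prod * base φ τ) :
    w₁.toList.map Sigma.fst = w₂.toList.map Sigma.fst := by
  by_cases hne : w₂.toList = []
  · have hw₁ : w₁ = .empty :=
      h₁.eq_empty_of_mem_range hφ ⟨τ, by simp [h, ofCoprodI_word_prod, hne]⟩
    simp [hw₁, hne, Word.empty]
  · obtain ⟨w', hw', hfst, hprod⟩ := h₂.exists_prod_mul_base hne τ
    rw [h₁.map_fst_eq_of_prod_eq hφ hw' (h.trans hprod.symm), hfst]

lemma exists_reduced_prod_eq_of_notMem_range (hφ : ∀ i, Function.Injective (φ i))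
    {g : PushoutI φ} (hg : g ∉ (base φ).range) :
    ∃ w : Word G, Reduced φ w ∧ ofCoprodI w.prod = g := by
  classical
  obtain ⟨d⟩ := NormalWord.transversal_nonempty φ hφ
  set v : NormalWord d := NormalWord.equiv g
  have hv : base φ v.head * ofCoprodI v.toWord.prod = g := NormalWord.equiv.symm_apply_apply g
  rcases hcase : v.toList with _ | ⟨⟨i, x⟩, l⟩
  · exact absurd ⟨v.head, by simp [← hv, ofCoprodI_word_prod, hcase]⟩ hg
  · have hred := v.reduced
    obtain ⟨w, hw, hwL⟩ := exists_reduced_toList_eq (φ := φ) (L := ⟨i, φ i v.head * x⟩ :: l)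
      (by
        rintro p (_ | ⟨_, hp⟩)
        · rw [mul_mem_cancel_left (MonoidHom.mem_range.2 ⟨v.head, rfl⟩)]
          exact hred _ (hcase ▸ List.mem_cons_self)
        · exact hred p (hcase ▸ List.mem_cons_of_mem _ hp))
      (by
        have hchain := v.chain_ne
        rw [hcase, ← List.isChain_map Sigma.fst] at hchain
        rw [← List.isChain_map Sigma.fst]
        simpa using hchain)
    refine ⟨w, hw, ?_⟩
    simp [← hv, ofCoprodI_word_prod, hwL, hcase, mul_assoc, of_apply_eq_base]

lemma Reduced.conj_mem_range_of_toList_eq_cons (hφ : ∀ i, Function.Injective (φ i))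
    {w : Word G} (hw : Reduced φ w) {i : ι} {x : G i} {l : List (Σ i, G i)}
    (hl : w.toList = ⟨i, x⟩ :: l) {σ : H}
    (hσ : (ofCoprodI (φ := φ) w.prod)⁻¹ * base φ σ * ofCoprodI w.prod ∈ (base φ).range) :
    (of (φ := φ) i x)⁻¹ * base φ σ * of i x ∈ (base φ).range := by
  by_contra hnot
  obtain ⟨τ, hτ⟩ := hσ
  have hy : x⁻¹ * φ i σ * x ∉ (φ i).range := by
    rintro ⟨ρ, hρ⟩
    exact hnot ⟨ρ, by simp [← of_apply_eq_base (φ := φ) i, hρ]⟩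
  have hlred : ∀ p ∈ l, p.2 ∉ (φ p.1).range :=
    fun p hp => hw p (hl ▸ List.mem_cons_of_mem _ hp)
  have hchain := w.chain_ne
  rw [hl] at hchain
  obtain ⟨t, ht, htL⟩ := exists_reduced_toList_eq hlred hchain.tail
  obtain ⟨w', hw', hw'L⟩ := exists_reduced_toList_eq (φ := φ)
    (L := ⟨i, x⁻¹ * φ i σ * x⟩ :: l)
    (by
      rintro p (_ | ⟨_, hp⟩)
      · exact hy
      · exact hlred p hp)
    (List.isChain_cons.mpr ⟨(List.isChain_cons.mp hchain).1, hchain.tail⟩)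
  have hwt : ofCoprodI (φ := φ) w.prod = of i x * ofCoprodI t.prod := by
    simp [ofCoprodI_word_prod, hl, htL]
  have hprod : ofCoprodI (φ := φ) w'.prod = ofCoprodI t.prod * base φ τ := by
    have hcomm : base φ σ * ofCoprodI w.prod = ofCoprodI w.prod * base φ τ := by
      rw [hτ]; group
    calc ofCoprodI (φ := φ) w'.prod = (of i x)⁻¹ * (base φ σ * ofCoprodI w.prod) := by
          simp [ofCoprodI_word_prod, hw'L, hwt, htL, of_apply_eq_base, mul_assoc]
      _ = ofCoprodI t.prod * base φ τ := by
          rw [hcomm, hwt]; group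
  have hlen := congrArg List.length (hw'.map_fst_eq_of_prod_eq_mul_base hφ ht hprod)
  simp [hw'L, htL] at hlen

lemma conjSub_inf_base_range_le (hφ : ∀ i, Function.Injective (φ i)) {w : Word G}
    (hw : Reduced φ w) {i : ι} {x : G i} {l : List (Σ i, G i)}
    (hl : w.toList = ⟨i, x⟩ :: l) :
    conjSub (ofCoprodI w.prod) (base φ).range ⊓ (base φ).range ≤
      conjSub (of i x) (base φ).range := by
  rintro s ⟨hs, σ, rfl⟩
  exact mem_conjSub.2 (hw.conj_mem_range_of_toList_eq_cons hφ hl (mem_conjSub.1 hs))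

end Monoid.PushoutI

/-- If `Comm¹_{Γᵢ}(Σ) = Σ` for `i = 1, 2`, then `Comm¹_Γ(Σ) = Σ` in `Γ = Γ₁ ∗_Σ Γ₂`:
every `g ∉ Σ` satisfies `[Σ : Σ ∩ gΣg⁻¹] = ∞`. -/
theorem stmt8 {H : Type*} {G : Bool → Type*} [Group H] [∀ i, Group (G i)]
    (φ : ∀ i, H →* G i) (hφ : ∀ i, Function.Injective (φ i))
    (hyp : ∀ (i : Bool) (x : G i), x ∉ (φ i).range →
      (conjSub (PushoutI.of (φ := φ) i x) (PushoutI.base φ).range).relIndex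
        (PushoutI.base φ).range = 0) :
    ∀ g : PushoutI φ, g ∉ (PushoutI.base φ).range →
      (conjSub g (PushoutI.base φ).range).relIndex (PushoutI.base φ).range = 0 := by
  intro g hg
  obtain ⟨w, hw, rfl⟩ := exists_reduced_prod_eq_of_notMem_range hφ hg
  rcases hl : w.toList with _ | ⟨⟨i, x⟩, l⟩
  · exact absurd ⟨1, by simp [ofCoprodI_word_prod, hl]⟩ hg
  · rw [← Subgroup.inf_relIndex_right]
    exact Subgroup.relIndex_eq_zero_of_le_left (conjSub_inf_base_range_le hφ hw hl)
      (hyp i x (hw _ (hl ▸ List.mem_cons_self)))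
end

section
/- Let G be a group with subgroups Γ₁, Γ₂ ≤ G, and let S₁, S₂, S₃, S₄ ⊆ G be finite subsets. Then there exists a finite subset S ⊆ G such that (S₁Γ₂S₂) ∩ (S₃Γ₁S₄) ⊆ ⋃_{g,h,k ∈ S} h(Γ₁ ∩ gΓ₂g⁻¹)k. -/
section

variable {G : Type*} [Group G]

theorem mem_conjSub_iff {g y : G} {H : Subgroup G} : y ∈ conjSub g H ↔ g⁻¹ * y * g ∈ H := by
  simp only [conjSub, Subgroup.mem_map, MulEquiv.toMonoidHom_eq_coe, MonoidHom.coe_coe,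
    MulAut.conj_apply]
  constructor
  · rintro ⟨b, hb, rfl⟩
    simpa [mul_assoc] using hb
  · intro hy
    exact ⟨_, hy, by group⟩

theorem mul_inv_mem_conjSub {H : Subgroup G} {a c x x₀ : G} (hx : ∃ b ∈ H, x = a * b * c)
    (hx₀ : ∃ b ∈ H, x₀ = a * b * c) : x * x₀⁻¹ ∈ conjSub a H := by
  obtain ⟨b, hb, rfl⟩ := hx
  obtain ⟨b₀, hb₀, rfl⟩ := hx₀
  rw [mem_conjSub_iff]
  convert mul_mem hb (inv_mem hb₀) using 1
  group

theorem exists_mem_inf_conjSub_of_mem_inter {Γ₁ Γ₂ : Subgroup G} {a c a' c' x x₀ : G}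
    (hx₂ : ∃ b ∈ Γ₂, x = a * b * c) (hx₁ : ∃ b ∈ Γ₁, x = a' * b * c')
    (hx₀₂ : ∃ b ∈ Γ₂, x₀ = a * b * c) (hx₀₁ : ∃ b ∈ Γ₁, x₀ = a' * b * c') :
    ∃ y ∈ Γ₁ ⊓ conjSub (a'⁻¹ * a) Γ₂, x = a' * y * (a'⁻¹ * x₀) := by
  have h₁ := mem_conjSub_iff.mp (mul_inv_mem_conjSub hx₁ hx₀₁)
  have h₂ := mem_conjSub_iff.mp (mul_inv_mem_conjSub hx₂ hx₀₂)
  refine ⟨a'⁻¹ * (x * x₀⁻¹) * a', Subgroup.mem_inf.mpr ⟨h₁, mem_conjSub_iff.mpr ?_⟩, by group⟩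
  convert h₂ using 1
  group

theorem exists_finset_cover_inter (Γ₁ Γ₂ : Subgroup G) (a c a' c' : G) :
    ∃ S : Finset G, ∀ x : G, (∃ b ∈ Γ₂, x = a * b * c) → (∃ b ∈ Γ₁, x = a' * b * c') →
      ∃ g ∈ S, ∃ h ∈ S, ∃ k ∈ S, ∃ y ∈ Γ₁ ⊓ conjSub g Γ₂, x = h * y * k := by
  classical
  by_cases hne : ∃ x₀ : G, (∃ b ∈ Γ₂, x₀ = a * b * c) ∧ (∃ b ∈ Γ₁, x₀ = a' * b * c')
  · obtain ⟨x₀, hx₀₂, hx₀₁⟩ := hne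
    refine ⟨{a'⁻¹ * a, a', a'⁻¹ * x₀}, fun x hx₂ hx₁ => ?_⟩
    obtain ⟨y, hy, hx⟩ := exists_mem_inf_conjSub_of_mem_inter hx₂ hx₁ hx₀₂ hx₀₁
    exact ⟨_, by simp, _, by simp, _, by simp, y, hy, hx⟩
  · exact ⟨∅, fun x hx₂ hx₁ => (hne ⟨x, hx₂, hx₁⟩).elim⟩

end

/-- Covering `(S₁Γ₂S₂) ∩ (S₃Γ₁S₄)` by finitely many sets `h (Γ₁ ∩ gΓ₂g⁻¹) k`. -/
theorem stmt11 {G : Type*} [Group G] (Γ₁ Γ₂ : Subgroup G) (S₁ S₂ S₃ S₄ : Finset G) :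
    ∃ S : Finset G, ∀ x : G,
      (∃ a ∈ S₁, ∃ b ∈ Γ₂, ∃ c ∈ S₂, x = a * b * c) →
      (∃ a ∈ S₃, ∃ b ∈ Γ₁, ∃ c ∈ S₄, x = a * b * c) →
      ∃ g ∈ S, ∃ h ∈ S, ∃ k ∈ S, ∃ y ∈ Γ₁ ⊓ conjSub g Γ₂, x = h * y * k := by
  classical
  choose T hT using fun t : G × G × G × G =>
    exists_finset_cover_inter Γ₁ Γ₂ t.1 t.2.1 t.2.2.1 t.2.2.2
  refine ⟨(S₁ ×ˢ S₂ ×ˢ S₃ ×ˢ S₄).biUnion T, ?_⟩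
  rintro x ⟨a, ha, b, hb, c, hc, hx₂⟩ ⟨a', ha', b', hb', c', hc', hx₁⟩
  have ht : (a, c, a', c') ∈ S₁ ×ˢ S₂ ×ˢ S₃ ×ˢ S₄ := by simp [ha, hc, ha', hc']
  have hsub : T (a, c, a', c') ⊆ (S₁ ×ˢ S₂ ×ˢ S₃ ×ˢ S₄).biUnion T :=
    Finset.subset_biUnion_of_mem T ht
  obtain ⟨g, hg, h, hh, k, hk, hy⟩ := hT (a, c, a', c') x ⟨b, hb, hx₂⟩ ⟨b', hb', hx₁⟩
  exact ⟨g, hsub hg, h, hsub hh, k, hsub hk, hy⟩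
end

section
/- Let Γ₀ be a group, Σ₀ ≤ Γ₀ a subgroup with [Σ₀ : Σ₀ ∩ gΣ₀g⁻¹] = ∞ for all g ∈ Γ₀ \ Σ₀, and assume additionally that the centralizer in Γ₀ of every finite-index subgroup of Σ₀ is trivial. Let Γᵢ = Γ₀ × Γ₀ for i = 1, 2, let Σ = {(g,g) : g ∈ Σ₀} ≤ Γ₁ ∩ Γ₂, and Γ = Γ₁ ∗_Σ Γ₂. Then for every i ∈ {1,2} and every h ∈ Γᵢ \ Σ one has [Σ : Σ ∩ hΣh⁻¹] = ∞. -/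
open Monoid PushoutI

theorem conjSub_map {G H : Type*} [Group G] [Group H] (f : G →* H) (g : G) (S : Subgroup G) :
    (conjSub g S).map f = conjSub (f g) (S.map f) := by
  unfold conjSub
  rw [Subgroup.map_map, Subgroup.map_map]
  congr 1
  ext y
  simp [map_mul, map_inv]

theorem relindex_map_of_injective {G H : Type*} [Group G] [Group H] {f : G →* H}
    (hf : Function.Injective f) (A B : Subgroup G) :
    (A.map f).relIndex (B.map f) = A.relIndex B := by
  rw [← Subgroup.relIndex_comap, Subgroup.comap_map_eq_self_of_injective hf]

/-- For the diagonal `Σ` of `Σ₀` in `Γᵢ = Γ₀ × Γ₀` and `Γ = Γ₁ ∗_Σ Γ₂`, every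
`h ∈ Γᵢ \ Σ` satisfies `[Σ : Σ ∩ hΣh⁻¹] = ∞`. -/
theorem stmt17 {Γ₀ : Type*} [Group Γ₀] (S₀ : Subgroup Γ₀)
    (h1 : ∀ g : Γ₀, g ∉ S₀ → (conjSub g S₀).relIndex S₀ = 0)
    (h2 : ∀ S₁ : Subgroup Γ₀, S₁ ≤ S₀ → S₁.relIndex S₀ ≠ 0 →
      Subgroup.centralizer (S₁ : Set Γ₀) = ⊥)
    (S : Subgroup (Γ₀ × Γ₀))
    (hS : S = S₀.map ((MonoidHom.id Γ₀).prod (MonoidHom.id Γ₀)))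
    (φ : ∀ _ : Bool, ↥S →* Γ₀ × Γ₀) (hφ : ∀ i, φ i = S.subtype) :
    ∀ (i : Bool) (x : Γ₀ × Γ₀), x ∉ S →
      (conjSub (PushoutI.of (φ := φ) i x) (PushoutI.base φ).range).relIndex
        (PushoutI.base φ).range = 0 := by
  intro i x hx
  set d : Γ₀ →* Γ₀ × Γ₀ := (MonoidHom.id Γ₀).prod (MonoidHom.id Γ₀) with hd
  have hdinj : Function.Injective d := fun a b h => congrArg Prod.fst h
  have hinj : Function.Injective (PushoutI.of (φ := φ) i) :=
    PushoutI.of_injective (fun j => by rw [hφ]; exact Subtype.coe_injective) i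
  have hrange : (PushoutI.base φ).range = S.map (PushoutI.of (φ := φ) i) := by
    rw [← PushoutI.of_comp_eq_base i, MonoidHom.range_comp, hφ, Subgroup.range_subtype]
  rw [hrange, ← conjSub_map, relindex_map_of_injective hinj]
  -- now a statement purely in Γ₀ × Γ₀
  by_contra hne
  set T : Subgroup Γ₀ := (conjSub x S ⊓ S).comap d with hT
  have hTmap : (conjSub x S ⊓ S) = T.map d := by
    rw [hT, Subgroup.map_comap_eq_self]
    refine le_trans inf_le_right ?_
    rw [hS]; exact Subgroup.map_le_range d S₀
  have hrel : T.relIndex S₀ ≠ 0 := by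
    have h := relindex_map_of_injective hdinj T S₀
    rw [← hTmap, ← hS, Subgroup.inf_relIndex_right] at h
    rw [← h]; exact hne
  have hmemT : ∀ s : Γ₀, s ∈ T → s ∈ S₀ ∧ ∃ t ∈ S₀, x.1 * t * x.1⁻¹ = s ∧ x.2 * t * x.2⁻¹ = s := by
    intro s hs
    obtain ⟨hs1, hs2⟩ := hs
    rw [hS] at hs2
    obtain ⟨u, hu, hu2⟩ := hs2
    have hus : u = s := congrArg Prod.fst hu2
    subst hus
    refine ⟨hu, ?_⟩
    obtain ⟨p, hp, hp2⟩ := hs1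
    rw [hS] at hp
    obtain ⟨t, ht, ht2⟩ := hp
    subst ht2
    refine ⟨t, ht, ?_, ?_⟩
    · exact congrArg Prod.fst hp2
    · exact congrArg Prod.snd hp2
  have hTS₀ : T ≤ S₀ := fun s hs => (hmemT s hs).1
  have hconj : ∀ g : Γ₀, T ≤ conjSub g S₀ → g ∈ S₀ := by
    intro g hle
    by_contra hg
    exact hne (by
      have := Subgroup.relIndex_dvd_of_le_left S₀ hle
      rw [h1 g hg] at this
      exact absurd (zero_dvd_iff.mp this) hrel)
  have ha : x.1 ∈ S₀ := by
    refine hconj x.1 (fun s hs => ?_)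
    obtain ⟨_, t, ht, h1', _⟩ := hmemT s hs
    exact ⟨t, ht, h1'⟩
  have hb : x.2 ∈ S₀ := by
    refine hconj x.2 (fun s hs => ?_)
    obtain ⟨_, t, ht, _, h2'⟩ := hmemT s hs
    exact ⟨t, ht, h2'⟩
  have hc : x.2 * x.1⁻¹ ∈ Subgroup.centralizer (T : Set Γ₀) := by
    rw [Subgroup.mem_centralizer_iff]
    intro s hs
    obtain ⟨_, t, ht, h1', h2'⟩ := hmemT s hs
    have htv : t = x.1⁻¹ * s * x.1 := by
      rw [← h1']; group
    rw [htv] at h2'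
    calc s * (x.2 * x.1⁻¹) = x.2 * (x.1⁻¹ * s * x.1) * x.2⁻¹ * (x.2 * x.1⁻¹) := by rw [h2']
    _ = (x.2 * x.1⁻¹) * s := by group
  rw [h2 T hTS₀ hrel, Subgroup.mem_bot] at hc
  have hab : x.2 = x.1 := by
    have := congrArg (· * x.1) hc
    simpa using this
  apply hx
  rw [hS]
  exact ⟨x.1, ha, by ext <;> simp [hd, hab]⟩
end
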